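/- arXiv:2304.08864 — 10 statements merged into one kernel-verified Lean document; each statement's English description precedes it below -/
import Mathlib

section
/- The LIKE mechanism is strategy-proof: for every agent i, every fixed profile of bid sets of the other agents, and every possible bid set S ⊆ {1,…,m} that agent i could report, agent i's expected utility under the LIKE mechanism when bidding truthfully (i.e., bidding for item F_k iff u_i(F_k) > 0) is at least her expected utility when reporting S. Concretely, writing B_k^{-i} for the set of other agents bidding for item F_k, ∑_{k : u_i(F_k)>0} u_i(F_k)/(|B_k^{-i}|+1) ≥ ∑_{k ∈ S} u_i(F_k)/(|B_k^{-i}|+1). -/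
/-!
The expected utility is a sum of independent nonnegative per-item contributions
`u k / (|B_k^{-i}| + 1)`, and the truthful bid set contains every item whose contribution is
nonzero, so no other bid set can collect more.
-/

open Finset

attribute [local instance] Classical.propDecidable

theorem Finset.sum_le_sum_of_ne_zero_of_nonneg {ι M : Type*} [AddCommMonoid M] [PartialOrder M]
    [IsOrderedAddMonoid M] {f : ι → M} {s t : Finset ι} (hf : ∀ x ∈ t, 0 ≤ f x)
    (h : ∀ x ∈ s, f x ≠ 0 → x ∈ t) :
    ∑ x ∈ s, f x ≤ ∑ x ∈ t, f x := by
  rw [← sum_filter_ne_zero]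
  exact sum_le_sum_of_subset_of_nonneg (fun x hx ↦ h x (mem_filter.1 hx).1 (mem_filter.1 hx).2)
    fun x hx _ ↦ hf x hx

theorem like_strategyproof_general (n m : ℕ) (Bminus : Fin m → Finset (Fin n))
    (u : Fin m → ℝ) (hu : ∀ k, 0 ≤ u k) (S : Finset (Fin m)) :
    ∑ k ∈ Finset.univ.filter (fun k => 0 < u k), u k / ((Bminus k).card + 1) ≥
      ∑ k ∈ S, u k / ((Bminus k).card + 1) := by
  refine sum_le_sum_of_ne_zero_of_nonneg (fun k _ ↦ div_nonneg (hu k) (by positivity)) ?_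
  intro k _ hk
  have hu_ne : u k ≠ 0 := fun h ↦ hk (by rw [h, zero_div])
  exact mem_filter.2 ⟨mem_univ k, (hu k).lt_of_ne' hu_ne⟩

/-- **The LIKE mechanism is strategy-proof.**
There are `n` agents and `m` items.  Agent `i` has nonnegative utilities `u k` for the
items.  For each item `k`, `Bminus k` is the (fixed) set of *other* agents bidding for
item `k` (so `i ∉ Bminus k`).  Under the LIKE mechanism an item is allocated uniformly
at random among its bidders, so if agent `i` bids for item `k` she receives it with
probability `1 / (|Bminus k| + 1)`.  For every bid set `S ⊆ {1,…,m}` that agent `i`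
could report, her expected utility when bidding truthfully (bidding for item `k` iff
`u k > 0`) is at least her expected utility when reporting `S`:
`∑_{k : u k > 0} u k / (|B_k^{-i}| + 1) ≥ ∑_{k ∈ S} u k / (|B_k^{-i}| + 1)`. -/
theorem like_strategyproof (n m : ℕ) (i : Fin n) (Bminus : Fin m → Finset (Fin n))
    (hi : ∀ k, i ∉ Bminus k) (u : Fin m → ℝ) (hu : ∀ k, 0 ≤ u k) (S : Finset (Fin m)) :
    ∑ k ∈ Finset.univ.filter (fun k => 0 < u k), u k / ((Bminus k).card + 1) ≥
      ∑ k ∈ S, u k / ((Bminus k).card + 1) :=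
  like_strategyproof_general n m Bminus u hu S
end

section
/- The Weighted LIKE mechanism is strategy-proof even with general utilities: for every agent i, every fixed profile of bid sets of the other agents, and every possible bid set S ⊆ {1,…,m} that agent i could report, agent i's expected utility under the Weighted LIKE mechanism when bidding truthfully (bidding for F_k iff u_i(F_k) > 0) is at least her expected utility when reporting S. Concretely, writing W_k = ∑_{j ∈ B_k^{-i}} w_j for the total weight of the other agents bidding for F_k, ∑_{k : u_i(F_k)>0} u_i(F_k)·w_i/(w_i + W_k) ≥ ∑_{k ∈ S} u_i(F_k)·w_i/(w_i + W_k). -/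
open Finset

attribute [local instance] Classical.propDecidable

/-- Truthful bidding is a best response whatever the winning probabilities `p` are: items of
zero utility contribute nothing, and all other items contribute nonnegatively. -/
theorem sum_mul_le_sum_filter_pos {ι : Type*} [Fintype ι] (u p : ι → ℝ)
    (hu : ∀ k, 0 ≤ u k) (hp : ∀ k, 0 ≤ p k) (S : Finset ι) :
    ∑ k ∈ S, u k * p k ≤ ∑ k ∈ univ.filter (fun k => 0 < u k), u k * p k :=
  calc ∑ k ∈ S, u k * p k
      = ∑ k ∈ S.filter (fun k => 0 < u k), u k * p k := by
        refine (sum_filter_of_ne fun k _ hk => (hu k).lt_of_ne ?_).symm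
        intro hzero
        simp [← hzero] at hk
    _ ≤ ∑ k ∈ univ.filter (fun k => 0 < u k), u k * p k :=
        sum_le_sum_of_subset_of_nonneg (filter_subset_filter _ (subset_univ S))
          fun k _ _ => mul_nonneg (hu k) (hp k)

theorem weightedLike_strategyproof_general (n m : ℕ) (i : Fin n) (w : Fin n → ℝ)
    (hw : ∀ j, 0 < w j) (Bminus : Fin m → Finset (Fin n))
    (u : Fin m → ℝ) (hu : ∀ k, 0 ≤ u k) (S : Finset (Fin m)) :
    ∑ k ∈ Finset.univ.filter (fun k => 0 < u k),
        u k * w i / (w i + ∑ j ∈ Bminus k, w j) ≥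
      ∑ k ∈ S, u k * w i / (w i + ∑ j ∈ Bminus k, w j) := by
  have hwin : ∀ k, 0 ≤ w i / (w i + ∑ j ∈ Bminus k, w j) := fun k =>
    div_nonneg (hw i).le (add_nonneg (hw i).le (sum_nonneg fun j _ => (hw j).le))
  simp only [mul_div_assoc]
  exact sum_mul_le_sum_filter_pos u _ hu hwin S

/-- **The Weighted LIKE mechanism is strategy-proof even with general utilities.**
There are `n` agents with positive weights `w` and `m` items.  Agent `i` has
nonnegative utilities `u k`.  For each item `k`, `Bminus k` is the (fixed) set of
*other* agents bidding for item `k` (so `i ∉ Bminus k`), with total weight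
`W_k = ∑_{j ∈ Bminus k} w j`.  Under the Weighted LIKE mechanism, if agent `i` bids
for item `k` she receives it with probability `w i / (w i + W_k)`.  For every bid set
`S ⊆ {1,…,m}` that agent `i` could report, her expected utility when bidding
truthfully (bidding for item `k` iff `u k > 0`) is at least her expected utility when
reporting `S`:
`∑_{k : u k > 0} u k · w i/(w i + W_k) ≥ ∑_{k ∈ S} u k · w i/(w i + W_k)`. -/
theorem weightedLike_strategyproof (n m : ℕ) (i : Fin n) (w : Fin n → ℝ)
    (hw : ∀ j, 0 < w j) (Bminus : Fin m → Finset (Fin n)) (hi : ∀ k, i ∉ Bminus k)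
    (u : Fin m → ℝ) (hu : ∀ k, 0 ≤ u k) (S : Finset (Fin m)) :
    ∑ k ∈ Finset.univ.filter (fun k => 0 < u k),
        u k * w i / (w i + ∑ j ∈ Bminus k, w j) ≥
      ∑ k ∈ S, u k * w i / (w i + ∑ j ∈ Bminus k, w j) :=
  weightedLike_strategyproof_general n m i w hw Bminus u hu S
end

section
/- The Balanced LIKE mechanism is strategy-proof for two agents with 0/1 utilities: with n = 2 agents whose utilities satisfy u_i(F_k) ∈ {0,1}, for any fixed bid sets of agent 2 and any bid sets S_1,…,S_m ⊆ {1} that agent 1 could report, agent 1's expected total utility in the Balanced LIKE process when bidding truthfully (bidding for F_k iff u_1(F_k) = 1) is at least her expected total utility when reporting the alternative bids, where in both cases utility is evaluated with respect to agent 1's true utilities u_1. -/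
open Finset

attribute [local instance] Classical.propDecidable

noncomputable section

/-- Number of items agent `j` has received in rounds strictly before round `k`
under the outcome `a` (where `a k = some j` means item `k` went to agent `j`). -/
def countBefore {n m : ℕ} (a : Fin m → Option (Fin n)) (j : Fin n) (k : Fin m) : ℕ :=
  (Finset.univ.filter fun k' : Fin m => k' < k ∧ a k' = some j).card

/-- The set of agents feasible for item `k` under the Weighted Balanced LIKE mechanism:
those bidders minimizing (count so far)/weight.  (With all weights equal to 1 this is the
Balanced LIKE mechanism.) -/
def minSet {n m : ℕ} (w : Fin n → ℝ) (B : Fin m → Finset (Fin n))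
    (a : Fin m → Option (Fin n)) (k : Fin m) : Finset (Fin n) :=
  (B k).filter fun j => ∀ l ∈ B k,
    (countBefore a j k : ℝ) / w j ≤ (countBefore a l k : ℝ) / w l

/-- Conditional probability of the allocation decision `a k` made at round `k`,
given the history encoded in `a`. -/
def stepProb {n m : ℕ} (w : Fin n → ℝ) (B : Fin m → Finset (Fin n))
    (a : Fin m → Option (Fin n)) (k : Fin m) : ℝ :=
  if B k = ∅ then (if a k = none then 1 else 0)
  else
    match a k with
    | none => 0
    | some j => if j ∈ minSet w B a k then 1 / (minSet w B a k).card else 0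

/-- Probability of the full outcome `a` under the Weighted Balanced LIKE process. -/
def outcomeProb {n m : ℕ} (w : Fin n → ℝ) (B : Fin m → Finset (Fin n))
    (a : Fin m → Option (Fin n)) : ℝ :=
  ∏ k, stepProb w B a k

/-- Realized utility, w.r.t. the utility function `u`, of agent `j`'s bundle in outcome `a`. -/
def realizedUtil {n m : ℕ} (u : Fin m → ℝ) (a : Fin m → Option (Fin n)) (j : Fin n) : ℝ :=
  ∑ k, if a k = some j then u k else 0

/-- Expected utility, w.r.t. the utility function `u`, of agent `j`'s (random) bundle
under the Weighted Balanced LIKE process. -/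
def expUtil {n m : ℕ} (w : Fin n → ℝ) (B : Fin m → Finset (Fin n))
    (u : Fin m → ℝ) (j : Fin n) : ℝ :=
  ∑ a : Fin m → Option (Fin n), outcomeProb w B a * realizedUtil u a j

/-- Build round-wise bid sets from per-agent bid sets `s` (agent `j` bids on the items
in `s j`). -/
def mkBids {n m : ℕ} (s : Fin n → Finset (Fin m)) : Fin m → Finset (Fin n) :=
  fun k => Finset.univ.filter fun j => k ∈ s j

/-!
Write `d` for agent `0`'s lead, her count minus agent `1`'s. Since only `d` matters for the
allocation, agent `0`'s expected utility from the remaining rounds is a function `V d`, computed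
by backward induction one round at a time. When she bids truthfully with 0/1 utilities, `V` is
antitone and `V d ≤ V (d + 2) + 1`: a larger lead only hurts her, and a lead larger by two costs
her at most one valuable item. For such a continuation value, a one-round deviation never helps:
skipping a valuable item saves one unit of lead, which is worth at most one, and taking a
worthless item only increases her lead. Induction on the number of rounds finishes the proof.
-/

section WithInitialCounts

variable {n m : ℕ}

def argminSet (c : Fin n → ℕ) (S : Finset (Fin n)) : Finset (Fin n) :=
  S.filter fun j => ∀ l ∈ S, c j ≤ c l

def roundProb (c : Fin n → ℕ) (S : Finset (Fin n)) (o : Option (Fin n)) : ℝ :=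
  if S = ∅ then (if o = none then 1 else 0)
  else
    match o with
    | none => 0
    | some j => if j ∈ argminSet c S then 1 / (argminSet c S).card else 0

def outcomeProbFrom (c : Fin n → ℕ) (B : Fin m → Finset (Fin n))
    (a : Fin m → Option (Fin n)) : ℝ :=
  ∏ k, roundProb (fun j => c j + countBefore a j k) (B k) (a k)

def expUtilFrom (c : Fin n → ℕ) (B : Fin m → Finset (Fin n)) (u : Fin m → ℝ) (j : Fin n) : ℝ :=
  ∑ a : Fin m → Option (Fin n), outcomeProbFrom c B a * realizedUtil u a j

def afterAlloc (c : Fin n → ℕ) (o : Option (Fin n)) (j : Fin n) : ℕ :=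
  c j + if o = some j then 1 else 0

lemma stepProb_one (B : Fin m → Finset (Fin n)) (a : Fin m → Option (Fin n)) (k : Fin m) :
    stepProb (fun _ => 1) B a k = roundProb (fun j => 0 + countBefore a j k) (B k) (a k) := by
  have : minSet (fun _ => 1) B a k = argminSet (fun j => 0 + countBefore a j k) (B k) := by
    simp only [minSet, argminSet, div_one, Nat.cast_le, zero_add]
  unfold stepProb roundProb
  rw [this]

lemma expUtil_one_eq_expUtilFrom_zero (B : Fin m → Finset (Fin n)) (u : Fin m → ℝ) (j : Fin n) :
    expUtil (fun _ => 1) B u j = expUtilFrom 0 B u j := by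
  simp only [expUtil, expUtilFrom, outcomeProb, outcomeProbFrom, stepProb_one, Pi.zero_apply]

lemma countBefore_zero (a : Fin (m + 1) → Option (Fin n)) (j : Fin n) :
    countBefore a j 0 = 0 := by
  simp [countBefore]

lemma countBefore_cons_succ (o : Option (Fin n)) (a : Fin m → Option (Fin n)) (j : Fin n)
    (k : Fin m) :
    countBefore (Fin.cons o a : Fin (m + 1) → Option (Fin n)) j k.succ
      = (if o = some j then 1 else 0) + countBefore a j k := by
  rw [countBefore, countBefore, card_filter, card_filter, Fin.sum_univ_succ]
  simp [Fin.succ_pos, Fin.succ_lt_succ_iff]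

lemma outcomeProbFrom_cons (c : Fin n → ℕ) (B : Fin (m + 1) → Finset (Fin n))
    (o : Option (Fin n)) (a : Fin m → Option (Fin n)) :
    outcomeProbFrom c B (Fin.cons o a)
      = roundProb c (B 0) o * outcomeProbFrom (afterAlloc c o) (Fin.tail B) a := by
  simp only [outcomeProbFrom, Fin.prod_univ_succ, countBefore_zero, add_zero, Fin.cons_zero,
    Fin.cons_succ, countBefore_cons_succ, afterAlloc, add_assoc, Fin.tail]

lemma realizedUtil_cons (u : Fin (m + 1) → ℝ) (o : Option (Fin n)) (a : Fin m → Option (Fin n))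
    (j : Fin n) :
    realizedUtil u (Fin.cons o a) j
      = (if o = some j then u 0 else 0) + realizedUtil (Fin.tail u) a j := by
  rw [realizedUtil, Fin.sum_univ_succ]
  simp [realizedUtil, Fin.tail]

lemma sum_fun_fin_succ {α : Type*} [Fintype α] (f : (Fin (m + 1) → α) → ℝ) :
    ∑ a, f a = ∑ o : α, ∑ a : Fin m → α, f (Fin.cons o a) := by
  rw [← (Fin.consEquiv fun _ => α).sum_comp f, Fintype.sum_prod_type]
  rfl

lemma sum_roundProb (c : Fin n → ℕ) (S : Finset (Fin n)) : ∑ o, roundProb c S o = 1 := by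
  by_cases hS : S = ∅
  · simp [roundProb, hS]
  obtain ⟨j, hjS, hj⟩ := S.exists_min_image c (nonempty_iff_ne_empty.2 hS)
  have hcard : (argminSet c S).card ≠ 0 :=
    card_ne_zero_of_mem (mem_filter.2 ⟨hjS, hj⟩)
  simp only [roundProb, hS, if_false, Fintype.sum_option, zero_add]
  rw [sum_ite_mem, univ_inter, sum_const, nsmul_eq_mul]
  field_simp

lemma sum_outcomeProbFrom (c : Fin n → ℕ) (B : Fin m → Finset (Fin n)) :
    ∑ a, outcomeProbFrom c B a = 1 := by
  induction m generalizing c with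
  | zero => simp [outcomeProbFrom]
  | succ m ih =>
    simp only [sum_fun_fin_succ, outcomeProbFrom_cons, ← mul_sum, ih, mul_one]
    exact sum_roundProb c (B 0)

lemma expUtilFrom_succ (c : Fin n → ℕ) (B : Fin (m + 1) → Finset (Fin n))
    (u : Fin (m + 1) → ℝ) (j : Fin n) :
    expUtilFrom c B u j = ∑ o, roundProb c (B 0) o * ((if o = some j then u 0 else 0)
      + expUtilFrom (afterAlloc c o) (Fin.tail B) (Fin.tail u) j) := by
  rw [expUtilFrom, sum_fun_fin_succ]
  refine sum_congr rfl fun o _ => ?_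
  simp only [outcomeProbFrom_cons, realizedUtil_cons, mul_add, mul_assoc, ← mul_sum, sum_add_distrib,
    ← sum_mul, sum_outcomeProbFrom, one_mul, expUtilFrom]

end WithInitialCounts

def lead (c : Fin 2 → ℕ) : ℤ := (c 0 : ℤ) - c 1

/-- One round of backward induction: agent `0`'s value when she leads by `d`, the current item
is worth `x` to her and gets bids `S`, and `f` values her lead after this round. -/
def roundValue (S : Finset (Fin 2)) (x : ℝ) (f : ℤ → ℝ) (d : ℤ) : ℝ :=
  if 0 ∈ S then
    if 1 ∈ S then
      if d < 0 then x + f (d + 1)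
      else if 0 < d then f (d - 1)
      else (x + f (d + 1) + f (d - 1)) / 2
    else x + f (d + 1)
  else if 1 ∈ S then f (d - 1) else f d

def leadValue : (m : ℕ) → (Fin m → Finset (Fin 2)) → (Fin m → ℝ) → ℤ → ℝ
  | 0, _, _ => 0
  | m + 1, B, u => roundValue (B 0) (u 0) (leadValue m (Fin.tail B) (Fin.tail u))

lemma finset_fin_two_cases (S : Finset (Fin 2)) :
    S = ∅ ∨ S = {0} ∨ S = {1} ∨ S = univ := by
  revert S; decide

lemma argminSet_univ_fin_two (c : Fin 2 → ℕ) :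
    argminSet c univ = if c 0 < c 1 then {0} else if c 1 < c 0 then {1} else univ := by
  ext j
  fin_cases j <;> split_ifs <;> simp [argminSet] <;> omega

lemma sum_roundProb_mul_eq_roundValue (c : Fin 2 → ℕ) (S : Finset (Fin 2)) (x : ℝ)
    (f : ℤ → ℝ) :
    ∑ o, roundProb c S o * ((if o = some 0 then x else 0) + f (lead (afterAlloc c o)))
      = roundValue S x f (lead c) := by
  have hlead : ∀ o, lead (afterAlloc c o)
      = lead c + (if o = some 0 then 1 else 0) - (if o = some 1 then 1 else 0) := by
    intro o
    simp only [lead, afterAlloc]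
    push_cast
    ring
  simp only [hlead, Fintype.sum_option, Fin.sum_univ_two]
  obtain rfl | rfl | rfl | rfl := finset_fin_two_cases S
  · simp [roundProb, roundValue]
  · simp [roundProb, roundValue, argminSet, filter_singleton]
  · simp [roundProb, roundValue, argminSet, filter_singleton]
  · have huniv : (univ : Finset (Fin 2)) ≠ ∅ := univ_nonempty.ne_empty
    rcases lt_trichotomy (c 0) (c 1) with h | h | h
    · simp [roundProb, roundValue, argminSet_univ_fin_two, lead, huniv, h]
    · simp [roundProb, roundValue, argminSet_univ_fin_two, lead, huniv, h]
      ring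
    · simp [roundProb, roundValue, argminSet_univ_fin_two, lead, huniv, h, h.not_gt]

lemma expUtilFrom_eq_leadValue {m : ℕ} (c : Fin 2 → ℕ) (B : Fin m → Finset (Fin 2))
    (u : Fin m → ℝ) : expUtilFrom c B u 0 = leadValue m B u (lead c) := by
  induction m generalizing c with
  | zero => simp [expUtilFrom, realizedUtil, leadValue]
  | succ m ih =>
    simp only [expUtilFrom_succ, ih, leadValue]
    exact sum_roundProb_mul_eq_roundValue c (B 0) (u 0) _

structure IsSlowlyAntitone (f : ℤ → ℝ) : Prop where
  antitone : Antitone f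
  le_add_two : ∀ d, f d ≤ f (d + 2) + 1

lemma IsSlowlyAntitone.succ_le {f : ℤ → ℝ} (hf : IsSlowlyAntitone f) (d : ℤ) : f (d + 1) ≤ f d :=
  hf.antitone (Int.le_add_one le_rfl)

lemma roundValue_mono (S : Finset (Fin 2)) (x : ℝ) : Monotone (roundValue S x) := by
  intro f g hfg d
  unfold roundValue
  split_ifs <;> linarith [hfg d, hfg (d + 1), hfg (d - 1)]

lemma IsSlowlyAntitone.roundValue {f : ℤ → ℝ} (hf : IsSlowlyAntitone f) (S : Finset (Fin 2)) :
    IsSlowlyAntitone (roundValue S (if 0 ∈ S then 1 else 0) f) := by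
  constructor
  · refine antitone_int_of_succ_le fun d => ?_
    have := hf.succ_le (d - 1); have := hf.succ_le d; have := hf.succ_le (d + 1)
    have := hf.le_add_two (d - 1)
    unfold _root_.roundValue
    -- `ring_nf` identifies arguments of `f` such as `d + 1 + 1` and `d + 2` for `linarith`
    split_ifs <;> ring_nf at * <;> linarith
  · intro d
    have := hf.le_add_two (d - 1); have := hf.le_add_two d; have := hf.le_add_two (d + 1)
    unfold _root_.roundValue
    split_ifs <;> ring_nf at * <;> linarith

lemma roundValue_le_roundValue_truthful {f : ℤ → ℝ} (hf : IsSlowlyAntitone f)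
    {S T : Finset (Fin 2)} (hST : 1 ∈ S ↔ 1 ∈ T) (d : ℤ) :
    roundValue S (if 0 ∈ T then 1 else 0) f d ≤ roundValue T (if 0 ∈ T then 1 else 0) f d := by
  have := hf.succ_le (d - 1); have := hf.succ_le d; have := hf.le_add_two (d - 1)
  simp only [roundValue, hST]
  split_ifs <;> ring_nf at * <;> linarith

lemma isSlowlyAntitone_leadValue {m : ℕ} (B : Fin m → Finset (Fin 2)) :
    IsSlowlyAntitone (leadValue m B fun k => if 0 ∈ B k then 1 else 0) := by
  induction m with
  | zero => exact ⟨antitone_const, fun _ => by simp [leadValue]⟩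
  | succ m ih => exact (ih (Fin.tail B)).roundValue (B 0)

lemma leadValue_le_leadValue_truthful {m : ℕ} {S T : Fin m → Finset (Fin 2)}
    (hST : ∀ k, 1 ∈ S k ↔ 1 ∈ T k) :
    leadValue m S (fun k => if 0 ∈ T k then 1 else 0)
      ≤ leadValue m T (fun k => if 0 ∈ T k then 1 else 0) := by
  induction m with
  | zero => exact le_rfl
  | succ m ih =>
    intro d
    calc leadValue (m + 1) S (fun k => if 0 ∈ T k then 1 else 0) d
        ≤ roundValue (S 0) (if 0 ∈ T 0 then 1 else 0)
            (leadValue m (Fin.tail T) fun k => if 0 ∈ Fin.tail T k then 1 else 0) d :=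
          roundValue_mono _ _ (ih fun k => hST k.succ) d
      _ ≤ leadValue (m + 1) T (fun k => if 0 ∈ T k then 1 else 0) d :=
          roundValue_le_roundValue_truthful (isSlowlyAntitone_leadValue _) (hST 0) d

/-- **The Balanced LIKE mechanism is strategy-proof for two agents with 0/1 utilities.**
With `n = 2` agents whose utilities satisfy `u i k ∈ {0,1}`, for any fixed bid set `S2`
of agent 2 and any alternative bid set `S1` that agent 1 could report, agent 1's
expected total utility (w.r.t. her true utilities `u 0`) under the Balanced LIKE
process (the Weighted Balanced LIKE process with all weights `1`) when bidding
truthfully (bidding for item `k` iff `u 0 k > 0`) is at least her expected total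
utility when reporting `S1`. -/
theorem balancedLike_strategyproof_two_agents (m : ℕ) (u : Fin 2 → Fin m → ℝ)
    (h01 : ∀ i k, u i k = 0 ∨ u i k = 1) (S2 S1 : Finset (Fin m)) :
    expUtil (fun _ => (1 : ℝ))
        (mkBids ![Finset.univ.filter (fun k => 0 < u 0 k), S2]) (u 0) 0 ≥
      expUtil (fun _ => (1 : ℝ)) (mkBids ![S1, S2]) (u 0) 0 := by
  set T := mkBids ![Finset.univ.filter (fun k => 0 < u 0 k), S2]
  have htruthful : u 0 = fun k => if 0 ∈ T k then 1 else 0 := by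
    ext k
    rcases h01 0 k with h | h <;> simp [T, mkBids, h]
  have hbids : ∀ k, 1 ∈ mkBids ![S1, S2] k ↔ 1 ∈ T k := by
    simp [T, mkBids]
  simp only [expUtil_one_eq_expUtilFrom_zero, expUtilFrom_eq_leadValue, htruthful]
  exact leadValue_le_leadValue_truthful hbids _

end
end

section
/- The Balanced LIKE mechanism is not strategy-proof for three agents with 0/1 utilities: in the instance with agents A, B, C and items I_1, I_2, I_3, where A has utility 1 for all three items, B has utility 1 for I_1 and I_3 and 0 for I_2, and C has utility 1 only for I_2, if B and C bid truthfully then agent A's expected total utility under the Balanced LIKE process equals 9/8 when A bids truthfully (for all three items), but equals 5/4 when A bids only for I_2 and I_3; in particular 5/4 > 9/8, so A strictly gains by misreporting. -/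
open Finset

attribute [local instance] Classical.propDecidable

noncomputable section

/-!
With unit weights every round gives its item uniformly to a tie set of at most `n` bidders, so
`(n !) ^ m` times an expected item count is a natural number, and the two expectations become
finite computations checked by `decide`: `243 / 216 = 9 / 8` and `270 / 216 = 5 / 4`.

Truthfully, `A` wins `I₁` with probability `1/2` and is then ahead of `C` on `I₂` and of `B` on
`I₃`, so it gets nothing more. Without a bid on `I₁`, `B` takes it; then `A` either wins `I₂` (with
probability `1/2`) and ties with `B` on `I₃`, or loses `I₂` and surely wins `I₃`.
-/

open Nat

namespace BalancedLike

variable {n m : ℕ}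

def minBidders (B : Fin m → Finset (Fin n)) (a : Fin m → Option (Fin n)) (k : Fin m) :
    Finset (Fin n) :=
  (B k).filter fun j => ∀ l ∈ B k, countBefore a j k ≤ countBefore a l k

theorem minSet_one (B : Fin m → Finset (Fin n)) (a : Fin m → Option (Fin n)) (k : Fin m) :
    minSet (fun _ => (1 : ℝ)) B a k = minBidders B a k :=
  Finset.filter_congr fun j _ => by simp only [div_one, Nat.cast_le]

/-- `n !` times `stepProb` for unit weights: a natural number, as a tie set has at most `n`
agents. -/
def scaledStep (B : Fin m → Finset (Fin n)) (a : Fin m → Option (Fin n)) (k : Fin m) : ℕ :=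
  if B k = ∅ then (if a k = none then n ! else 0)
  else match a k with
    | none => 0
    | some j => if j ∈ minBidders B a k then n ! / #(minBidders B a k) else 0

theorem stepProb_one (B : Fin m → Finset (Fin n)) (a : Fin m → Option (Fin n)) (k : Fin m) :
    stepProb (fun _ => (1 : ℝ)) B a k = scaledStep B a k / n ! := by
  have hfac : (n ! : ℝ) ≠ 0 := by positivity
  unfold stepProb scaledStep
  rw [minSet_one]
  by_cases hB : B k = ∅
  · simp only [if_pos hB]
    split_ifs <;> simp [hfac]
  · simp only [if_neg hB]
    rcases a k with _ | j
    · simp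
    · by_cases hj : j ∈ minBidders B a k
      · have hpos : 0 < #(minBidders B a k) := Finset.card_pos.mpr ⟨j, hj⟩
        have hle : #(minBidders B a k) ≤ n := card_le_univ _ |>.trans_eq (Fintype.card_fin n)
        simp only [if_pos hj]
        rw [Nat.cast_div (Nat.dvd_factorial hpos hle) (by positivity)]
        field_simp
      · simp [hj]

def scaledExpCount (B : Fin m → Finset (Fin n)) (j : Fin n) : ℕ :=
  ∑ a : Fin m → Option (Fin n), (∏ k, scaledStep B a k) * #{k | a k = some j}

theorem expUtil_one_of_forall_eq_one (B : Fin m → Finset (Fin n)) {u : Fin m → ℝ}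
    (hu : ∀ k, u k = 1) (j : Fin n) :
    expUtil (fun _ => (1 : ℝ)) B u j = scaledExpCount B j / (n ! ^ m : ℕ) := by
  have hprob (a) :
      outcomeProb (fun _ => (1 : ℝ)) B a = (∏ k, (scaledStep B a k : ℝ)) / n ! ^ m := by
    simp only [outcomeProb, stepProb_one, Finset.prod_div_distrib, prod_const, Finset.card_fin]
  have hutil (a) : realizedUtil u a j = #{k | a k = some j} := by
    simp only [realizedUtil, hu, card_filter, Nat.cast_sum, Nat.cast_ite, Nat.cast_one,
      Nat.cast_zero]
  simp only [expUtil, scaledExpCount, hprob, hutil, Nat.cast_sum, Nat.cast_mul, Nat.cast_prod,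
    Nat.cast_pow, Finset.sum_div]
  exact Finset.sum_congr rfl fun a _ => by ring

end BalancedLike

open BalancedLike

/-- **The Balanced LIKE mechanism is not strategy-proof for three agents with 0/1
utilities.**
Agents `A = 0`, `B = 1`, `C = 2` and items `I₁ = 0`, `I₂ = 1`, `I₃ = 2`:
`A` has utility 1 for all three items, `B` has utility 1 for `I₁, I₃` and 0 for `I₂`,
and `C` has utility 1 only for `I₂`.  If `B` and `C` bid truthfully, then under the
Balanced LIKE process (all weights `1`) agent `A`'s expected total utility equals
`9/8` when `A` bids truthfully (for all three items), but equals `5/4` when `A` bids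
only for `I₂` and `I₃`; and `5/4 > 9/8`, so `A` strictly gains by misreporting. -/
theorem balancedLike_not_strategyproof_three_agents :
    ∀ u : Fin 3 → Fin 3 → ℝ, u = ![![1, 1, 1], ![1, 0, 1], ![0, 1, 0]] →
    expUtil (fun _ => (1 : ℝ))
        (mkBids fun j => Finset.univ.filter fun k => 0 < u j k) (u 0) 0 = 9 / 8 ∧
    expUtil (fun _ => (1 : ℝ))
        (mkBids (Function.update
          (fun j => Finset.univ.filter fun k => 0 < u j k) 0 ({1, 2} : Finset (Fin 3))))
        (u 0) 0 = 5 / 4 ∧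
    (5 / 4 : ℝ) > 9 / 8 := by
  intro u hu
  have htruthful : (fun j => univ.filter fun k => 0 < u j k) = ![univ, {0, 2}, {1}] := by
    subst hu; funext j; ext k; fin_cases j <;> fin_cases k <;> simp
  have hunit : ∀ k, u 0 k = 1 := by
    subst hu; intro k; fin_cases k <;> rfl
  simp only [htruthful, expUtil_one_of_forall_eq_one _ hunit]
  refine ⟨?_, ?_, by norm_num⟩
  · rw [show scaledExpCount (mkBids ![univ, {0, 2}, {1}]) 0 = 243 by decide]
    norm_num
  · rw [show scaledExpCount (mkBids (Function.update ![univ, {0, 2}, {1}] 0 {1, 2})) 0 = 270 by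
      decide]
    norm_num
end
end

section
/- The Balanced LIKE mechanism is not strategy-proof for two agents with general utilities: in the instance with agents A and B and items I_1, I_2, where A has utility 1/2 for both items, and B has utility 1/4 for I_1 and 3/4 for I_2, if A bids truthfully then agent B's expected total utility under the Balanced LIKE process equals 1/2 when B bids truthfully (for both items), but equals 3/4 when B bids only for I_2; in particular 3/4 > 1/2, so B strictly gains by misreporting. -/
open Finset

attribute [local instance] Classical.propDecidable

noncomputable section

/-! With unit weights, the first item goes to a uniformly random bidder and the second to a
bidder who did not receive the first, whenever there is one. If both agents bid on both items,
the process picks one of the two allocations giving each agent one item, each with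
probability 1/2, so B expects the average of its two values. If B skips the first item, A gets
it, after which B is the unique least-served bidder for the second item, which B values more. -/

section FirstRounds

variable {n m : ℕ}

lemma countBefore_one (a : Fin (m + 2) → Option (Fin n)) (j : Fin n) :
    countBefore a j 1 = if a 0 = some j then 1 else 0 := by
  have : (univ.filter fun k : Fin (m + 2) => k < 1 ∧ a k = some j) =
      ({0} : Finset (Fin (m + 2))).filter fun k => a k = some j := by
    ext k
    simp [Fin.lt_one_iff]
  rw [countBefore, this, filter_singleton]
  split_ifs <;> rfl

lemma minSet_zero (w : Fin n → ℝ) (B : Fin (m + 1) → Finset (Fin n))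
    (a : Fin (m + 1) → Option (Fin n)) : minSet w B a 0 = B 0 :=
  filter_true_of_mem fun j _ l _ => by simp [countBefore_zero]

lemma minSet_one_of_two_agents (B : Fin (m + 2) → Finset (Fin 2)) (hB : B 1 = univ)
    (a : Fin (m + 2) → Option (Fin 2)) :
    minSet (fun _ => 1) B a 1 = univ.filter fun j => a 0 ≠ some j := by
  ext j
  simp only [minSet, hB, mem_filter, mem_univ, true_and, countBefore_one, div_one,
    Fin.forall_fin_two]
  rcases a 0 with _ | i
  · simp
  · fin_cases i <;> fin_cases j <;> simp

end FirstRounds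

lemma outcomeProb_all_bid (a : Fin 2 → Option (Fin 2)) :
    outcomeProb (fun _ => 1) (fun _ => univ) a =
      if a ∈ ({![some 0, some 1], ![some 1, some 0]} : Finset _) then 1 / 2 else 0 := by
  obtain ⟨x, y, rfl⟩ : ∃ x y, a = ![x, y] := ⟨a 0, a 1, (FinVec.etaExpand_eq a).symm⟩
  rcases x with _ | i <;> rcases y with _ | j
  all_goals try fin_cases i
  all_goals try fin_cases j
  all_goals
    simp [outcomeProb, stepProb, Fin.prod_univ_two, minSet_zero, minSet_one_of_two_agents,
      filter_ne, univ_eq_empty_iff]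

lemma outcomeProb_second_agent_skips_first (a : Fin 2 → Option (Fin 2)) :
    outcomeProb (fun _ => 1) ![({0} : Finset (Fin 2)), univ] a =
      if a = ![some 0, some 1] then 1 else 0 := by
  obtain ⟨x, y, rfl⟩ : ∃ x y, a = ![x, y] := ⟨a 0, a 1, (FinVec.etaExpand_eq a).symm⟩
  rcases x with _ | i <;> rcases y with _ | j
  all_goals try fin_cases i
  all_goals try fin_cases j
  all_goals
    simp [outcomeProb, stepProb, Fin.prod_univ_two, minSet_zero, minSet_one_of_two_agents,
      filter_ne, univ_eq_empty_iff]

lemma expUtil_all_bid (u : Fin 2 → ℝ) (j : Fin 2) :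
    expUtil (fun _ => 1) (fun _ => univ) u j = (u 0 + u 1) / 2 := by
  simp only [expUtil, outcomeProb_all_bid, ite_mul, zero_mul]
  rw [sum_ite_mem, univ_inter, sum_pair (by simp)]
  fin_cases j <;> simp [realizedUtil, Fin.sum_univ_two] <;> ring

lemma expUtil_second_agent_skips_first (u : Fin 2 → ℝ) :
    expUtil (fun _ => 1) ![({0} : Finset (Fin 2)), univ] u 1 = u 1 := by
  simp [expUtil, outcomeProb_second_agent_skips_first, realizedUtil, Fin.sum_univ_two]

lemma mkBids_eq_univ {n m : ℕ} (s : Fin n → Finset (Fin m)) (hs : ∀ j k, k ∈ s j) :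
    mkBids s = fun _ => univ := by
  funext k
  exact filter_true_of_mem fun j _ => hs j k

lemma mkBids_update_one_singleton (s : Fin 2 → Finset (Fin 2)) (hs : s 0 = univ) :
    mkBids (Function.update s 1 {1}) = ![{0}, univ] := by
  funext k; ext j
  fin_cases j <;> fin_cases k <;> simp [mkBids, hs]

/-- **The Balanced LIKE mechanism is not strategy-proof for two agents with general
utilities.**
Agents `A = 0` and `B = 1` and items `I₁ = 0`, `I₂ = 1`: `A` has utility `1/2` for
both items, `B` has utility `1/4` for `I₁` and `3/4` for `I₂`.  If `A` bids truthfully,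
then under the Balanced LIKE process (all weights `1`) agent `B`'s expected total
utility equals `1/2` when `B` bids truthfully (for both items), but equals `3/4` when
`B` bids only for `I₂`; and `3/4 > 1/2`, so `B` strictly gains by misreporting. -/
theorem balancedLike_not_strategyproof_general_utilities :
    ∀ u : Fin 2 → Fin 2 → ℝ, u = ![![1 / 2, 1 / 2], ![1 / 4, 3 / 4]] →
    expUtil (fun _ => (1 : ℝ))
        (mkBids fun j => Finset.univ.filter fun k => 0 < u j k) (u 1) 1 = 1 / 2 ∧
    expUtil (fun _ => (1 : ℝ))
        (mkBids (Function.update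
          (fun j => Finset.univ.filter fun k => 0 < u j k) 1 ({1} : Finset (Fin 2))))
        (u 1) 1 = 3 / 4 ∧
    (3 / 4 : ℝ) > 1 / 2 := by
  rintro u rfl
  have hpos : ∀ j k, k ∈ univ.filter fun k =>
      0 < (![![1 / 2, 1 / 2], ![1 / 4, 3 / 4]] : Fin 2 → Fin 2 → ℝ) j k := by
    simp only [mem_filter, mem_univ, true_and, Fin.forall_fin_two]
    norm_num
  refine ⟨?_, ?_, by norm_num⟩
  · rw [mkBids_eq_univ _ hpos, expUtil_all_bid]
    norm_num
  · rw [mkBids_update_one_singleton _ (eq_univ_of_forall (hpos 0)),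
      expUtil_second_agent_skips_first]
    rfl

end
end

section
/- The LIKE mechanism is envy-free ex-ante: with 0/1 utilities and all agents bidding truthfully (so that B_k = {l : u_l(F_k) = 1}), for every pair of agents i and j, agent i's expected utility for agent j's allocation is at most agent i's expected utility for her own allocation, i.e., ∑_{k : j ∈ B_k} u_i(F_k)/|B_k| ≤ ∑_{k : i ∈ B_k} u_i(F_k)/|B_k|. -/
open Finset

attribute [local instance] Classical.propDecidable

section LikeMechanism

variable {α ι : Type*}

/-- The paper's `P(F, j)` for an item `F` whose set of bidders is `B`. -/
noncomputable def likeProb (B : Finset α) (j : α) : ℝ :=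
  if j ∈ B then (#B : ℝ)⁻¹ else 0

lemma likeProb_le_of_mem {B : Finset α} {i : α} (hi : i ∈ B) (j : α) :
    likeProb B j ≤ likeProb B i := by
  unfold likeProb
  rw [if_pos hi]
  split_ifs
  · exact le_rfl
  · positivity

lemma sum_filter_mem_div_card_eq_sum_mul_likeProb [Fintype ι] [DecidableEq α]
    (B : ι → Finset α) (v : ι → ℝ) (j : α) :
    ∑ k ∈ univ.filter (fun k => j ∈ B k), v k / #(B k) = ∑ k, v k * likeProb (B k) j := by
  rw [sum_filter]
  refine sum_congr rfl fun k _ => ?_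
  unfold likeProb
  split_ifs <;> simp [div_eq_mul_inv]

end LikeMechanism

/-- **The LIKE mechanism is envy-free ex-ante.**
There are `n` agents and `m` items, with 0/1 utilities `u i k ∈ {0,1}`.  All agents bid
truthfully, so the set of bidders for item `k` is `B k = {l : u l k = 1}`.  Under the
LIKE mechanism each item is allocated uniformly at random among its bidders, so agent
`j`'s probability of receiving item `k` is `1/|B k|` if `j ∈ B k` and `0` otherwise.
Then for every pair of agents `i, j`, agent `i`'s expected utility for agent `j`'s
allocation is at most her expected utility for her own allocation:
`∑_{k : j ∈ B k} u i k / |B k| ≤ ∑_{k : i ∈ B k} u i k / |B k|`. -/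
theorem like_envyFree_exAnte (n m : ℕ) (u : Fin n → Fin m → ℝ)
    (h01 : ∀ i k, u i k = 0 ∨ u i k = 1)
    (B : Fin m → Finset (Fin n))
    (hB : ∀ k, B k = Finset.univ.filter fun l => u l k = 1)
    (i j : Fin n) :
    ∑ k ∈ Finset.univ.filter (fun k => j ∈ B k), u i k / (B k).card ≤
      ∑ k ∈ Finset.univ.filter (fun k => i ∈ B k), u i k / (B k).card := by
  rw [sum_filter_mem_div_card_eq_sum_mul_likeProb, sum_filter_mem_div_card_eq_sum_mul_likeProb]
  refine sum_le_sum fun k _ => ?_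
  rcases h01 i k with hzero | hone
  · simp [hzero]
  · have hi : i ∈ B k := by simp [hB k, hone]
    simpa [hone] using likeProb_le_of_mem hi j
end

section
/- The Balanced LIKE mechanism is bounded envy-free ex-post with bound 1: with 0/1 utilities and all agents bidding truthfully, in every outcome of positive probability of the Balanced LIKE process and for every pair of agents i and j, the final bundles satisfy u_i(A_j) ≤ u_i(A_i) + 1. -/
open Finset

attribute [local instance] Classical.propDecidable

noncomputable section

section BalancedLike

variable {n m : ℕ} {w : Fin n → ℝ} {B : Fin m → Finset (Fin n)} {a : Fin m → Option (Fin n)}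

lemma stepProb_ne_zero (ha : 0 < outcomeProb w B a) (k : Fin m) : stepProb w B a k ≠ 0 :=
  prod_ne_zero_iff.1 ha.ne' k (mem_univ k)

lemma mem_minSet_of_allocated (ha : 0 < outcomeProb w B a) {k : Fin m} {j : Fin n}
    (hk : a k = some j) : j ∈ minSet w B a k := by
  have h := stepProb_ne_zero ha k
  by_contra hj
  by_cases hBk : B k = ∅ <;> simp_all [stepProb]

lemma mem_bids_of_allocated (ha : 0 < outcomeProb w B a) {k : Fin m} {j : Fin n}
    (hk : a k = some j) : j ∈ B k :=
  (mem_filter.1 (mem_minSet_of_allocated ha hk)).1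

lemma countBefore_le_of_allocated (ha : 0 < outcomeProb (fun _ => 1) B a) {k : Fin m}
    {j l : Fin n} (hk : a k = some j) (hl : l ∈ B k) : countBefore a j k ≤ countBefore a l k := by
  simpa using (mem_filter.1 (mem_minSet_of_allocated ha hk)).2 l hl

end BalancedLike

lemma countBefore_le_card {n m : ℕ} (a : Fin m → Option (Fin n)) (j : Fin n) (k : Fin m) :
    countBefore a j k ≤ #{k' | a k' = some j} :=
  card_le_card (monotone_filter_right _ fun _ _ h => h.2)

lemma card_le_countBefore_add_one {n m : ℕ} {a : Fin m → Option (Fin n)} {j : Fin n}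
    {s : Finset (Fin m)} {k₀ : Fin m} (hs : ∀ k ∈ s, a k = some j) (hmax : ∀ k ∈ s, k ≤ k₀) :
    #s ≤ countBefore a j k₀ + 1 := by
  have hsub : s ⊆ insert k₀ ({k | k < k₀ ∧ a k = some j} : Finset (Fin m)) := fun k hk => by
    rcases (hmax k hk).lt_or_eq with hlt | rfl
    · exact mem_insert_of_mem (mem_filter.2 ⟨mem_univ k, hlt, hs k hk⟩)
    · exact mem_insert_self k _
  exact (card_le_card hsub).trans (card_insert_le _ _)

/-- When `j` received the last of these items, `i` was among the bidders, so `j`'s count at that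
time was minimal among them, in particular at most `i`'s. -/
theorem card_allocated_among_bids_le {n m : ℕ} {B : Fin m → Finset (Fin n)}
    {a : Fin m → Option (Fin n)} (ha : 0 < outcomeProb (fun _ => 1) B a) (i j : Fin n) :
    #{k | a k = some j ∧ i ∈ B k} ≤ #{k | a k = some i} + 1 := by
  set T : Finset (Fin m) := {k | a k = some j ∧ i ∈ B k}
  rcases T.eq_empty_or_nonempty with hT | hT
  · simp [hT]
  obtain ⟨k₀, hk₀, hmax⟩ := T.exists_max_image id hT
  obtain ⟨-, hk₀j, hk₀i⟩ := mem_filter.1 hk₀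
  calc #T ≤ countBefore a j k₀ + 1 :=
        card_le_countBefore_add_one (fun k hk => (mem_filter.1 hk).2.1) hmax
    _ ≤ countBefore a i k₀ + 1 := Nat.add_le_add_right (countBefore_le_of_allocated ha hk₀j hk₀i) 1
    _ ≤ #{k | a k = some i} + 1 := Nat.add_le_add_right (countBefore_le_card a i k₀) 1

lemma realizedUtil_eq_card_of_zero_or_one {n m : ℕ} {u : Fin m → ℝ}
    (hu : ∀ k, u k = 0 ∨ u k = 1) (a : Fin m → Option (Fin n)) (j : Fin n) :
    realizedUtil u a j = #{k | a k = some j ∧ 0 < u k} := by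
  rw [realizedUtil, card_filter, Nat.cast_sum]
  refine sum_congr rfl fun k _ => ?_
  rcases hu k with h | h <;> by_cases hk : a k = some j <;> simp [h, hk]

/-- **The Balanced LIKE mechanism is bounded envy-free ex-post with bound 1.**
With 0/1 utilities and all agents bidding truthfully (the bidders for item `k` are
exactly the agents `l` with `u l k > 0`), in every outcome `a` of positive probability
of the Balanced LIKE process (the Weighted Balanced LIKE process with all weights `1`)
and for every pair of agents `i` and `j`, the final bundles satisfy
`u_i(A_j) ≤ u_i(A_i) + 1`. -/
theorem balancedLike_boundedEnvyFree_exPost (n m : ℕ) (u : Fin n → Fin m → ℝ)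
    (h01 : ∀ i k, u i k = 0 ∨ u i k = 1) (B : Fin m → Finset (Fin n))
    (hB : ∀ k, B k = Finset.univ.filter fun l => 0 < u l k)
    (a : Fin m → Option (Fin n)) (ha : 0 < outcomeProb (fun _ => (1 : ℝ)) B a)
    (i j : Fin n) :
    realizedUtil (u i) a j ≤ realizedUtil (u i) a i + 1 := by
  have hbid : ∀ k, 0 < u i k ↔ i ∈ B k := by simp [hB]
  have hown : (#{k | a k = some i ∧ 0 < u i k} : ℝ) = #{k | a k = some i} := by
    congr 2
    exact filter_congr fun k _ =>
      and_iff_left_of_imp fun hk => (hbid k).2 (mem_bids_of_allocated ha hk)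
  rw [realizedUtil_eq_card_of_zero_or_one (h01 i), realizedUtil_eq_card_of_zero_or_one (h01 i),
    hown]
  simp only [hbid]
  exact_mod_cast card_allocated_among_bids_le ha i j

end
end

section
/- Weighted balancedness invariant: let w_i, w_j > 0, and consider any finite sequence of rounds in which nonnegative integer counts c_i and c_j both start at 0 and in each round at most one of them increases by 1, with the property that c_j increases in a round only if c_j/w_j ≤ c_i/w_i held at the start of that round. Then after every round, c_j/w_j ≤ c_i/w_i + 1/w_j. In particular, every realization of the Weighted Balanced LIKE process in which agent i bids on every item that agent j receives satisfies |A_j|/w_j ≤ |A_i|/w_i + 1/w_j for the final bundle sizes. -/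
open Finset

attribute [local instance] Classical.propDecidable

noncomputable section

/-- Size of agent `j`'s final bundle in outcome `a`. -/
def bundleSize {n m : ℕ} (a : Fin m → Option (Fin n)) (j : Fin n) : ℕ :=
  (Finset.univ.filter fun k => a k = some j).card

/-!
Whenever `c_j` is about to increase we have `c_j / w_j ≤ c_i / w_i`, so right after the increase
`c_j / w_j ≤ c_i / w_i + 1 / w_j`; an increase of `c_i` only helps, so this bound is an invariant.
In a realization of positive probability, agent `j` receives an item only as a minimizer of
count/weight among the bidders, and `i` is one of them; hence the counts of `i` and `j`, read
round by round, form such a sequence.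
-/

def BalancedStep (wi wj : ℝ) (ci cj : ℕ → ℕ) (t : ℕ) : Prop :=
  (ci (t + 1) = ci t ∧ cj (t + 1) = cj t) ∨
  (ci (t + 1) = ci t + 1 ∧ cj (t + 1) = cj t) ∨
  (cj (t + 1) = cj t + 1 ∧ ci (t + 1) = ci t ∧ (cj t : ℝ) / wj ≤ (ci t : ℝ) / wi)

theorem BalancedStep.invariant {wi wj : ℝ} (hwi : 0 < wi) {ci cj : ℕ → ℕ} {t : ℕ}
    (hstep : BalancedStep wi wj ci cj t)
    (ht : (cj t : ℝ) / wj ≤ (ci t : ℝ) / wi + 1 / wj) :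
    (cj (t + 1) : ℝ) / wj ≤ (ci (t + 1) : ℝ) / wi + 1 / wj := by
  rcases hstep with ⟨hi, hj⟩ | ⟨hi, hj⟩ | ⟨hj, hi, hle⟩
  · rwa [hi, hj]
  · rw [hi, hj, Nat.cast_succ]
    have : (ci t : ℝ) / wi ≤ (ci t + 1) / wi := by gcongr; linarith
    linarith
  · rw [hi, hj, Nat.cast_succ, add_div]
    linarith

theorem div_le_div_add_one_div_of_balancedStep {wi wj : ℝ} (hwi : 0 < wi) (hwj : 0 < wj)
    {ci cj : ℕ → ℕ} (hci : ci 0 = 0) (hcj : cj 0 = 0) (hstep : ∀ t, BalancedStep wi wj ci cj t)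
    (t : ℕ) : (cj t : ℝ) / wj ≤ (ci t : ℝ) / wi + 1 / wj := by
  induction t with
  | zero => simp only [hci, hcj, Nat.cast_zero, zero_div, zero_add]; positivity
  | succ t ih => exact (hstep t).invariant hwi ih

section Allocation

variable {n m : ℕ}

def outcomeAt (a : Fin m → Option (Fin n)) (t : ℕ) : Option (Fin n) :=
  if h : t < m then a ⟨t, h⟩ else none

def countUpTo (a : Fin m → Option (Fin n)) (l : Fin n) (t : ℕ) : ℕ :=
  #{s ∈ range t | outcomeAt a s = some l}

theorem countUpTo_zero (a : Fin m → Option (Fin n)) (l : Fin n) : countUpTo a l 0 = 0 := by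
  simp [countUpTo]

theorem countUpTo_succ (a : Fin m → Option (Fin n)) (l : Fin n) (t : ℕ) :
    countUpTo a l (t + 1) = countUpTo a l t + if outcomeAt a t = some l then 1 else 0 := by
  unfold countUpTo
  rw [range_add_one, filter_insert]
  split_ifs with h
  · exact card_insert_of_notMem (by simp)
  · rfl

theorem exists_of_outcomeAt_eq_some {a : Fin m → Option (Fin n)} {t : ℕ} {l : Fin n}
    (h : outcomeAt a t = some l) : ∃ k : Fin m, (k : ℕ) = t ∧ a k = some l := by
  unfold outcomeAt at h
  split_ifs at h with ht
  exact ⟨⟨t, ht⟩, rfl, h⟩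

theorem card_filter_lt_eq_countUpTo (a : Fin m → Option (Fin n)) (l : Fin n) (t : ℕ) :
    #{k : Fin m | (k : ℕ) < t ∧ a k = some l} = countUpTo a l t := by
  rw [countUpTo, ← card_map Fin.valEmbedding]
  congr 1
  ext s
  simp only [mem_map, mem_filter, mem_univ, true_and, Fin.valEmbedding_apply, mem_range]
  constructor
  · rintro ⟨k, ⟨hkt, hk⟩, rfl⟩
    exact ⟨hkt, by simp [outcomeAt, hk]⟩
  · rintro ⟨hst, hs⟩
    obtain ⟨k, rfl, hk⟩ := exists_of_outcomeAt_eq_some hs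
    exact ⟨k, ⟨hst, hk⟩, rfl⟩

theorem countBefore_eq_countUpTo (a : Fin m → Option (Fin n)) (l : Fin n) (k : Fin m) :
    countBefore a l k = countUpTo a l k :=
  card_filter_lt_eq_countUpTo a l k

theorem bundleSize_eq_countUpTo (a : Fin m → Option (Fin n)) (l : Fin n) :
    bundleSize a l = countUpTo a l m := by
  rw [← card_filter_lt_eq_countUpTo a l m, bundleSize]
  simp only [Fin.is_lt, true_and]

theorem mem_minSet_of_stepProb_ne_zero {w : Fin n → ℝ} {B : Fin m → Finset (Fin n)}
    {a : Fin m → Option (Fin n)} {k : Fin m} {j : Fin n}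
    (hk : stepProb w B a k ≠ 0) (hj : a k = some j) : j ∈ minSet w B a k := by
  by_contra hmem
  unfold stepProb at hk
  split_ifs at hk <;> simp_all

theorem balancedStep_countUpTo {w : Fin n → ℝ} {B : Fin m → Finset (Fin n)}
    {a : Fin m → Option (Fin n)} {i j : Fin n} (hij : i ≠ j) (hprob : 0 < outcomeProb w B a)
    (hbid : ∀ k, a k = some j → i ∈ B k) (t : ℕ) :
    BalancedStep (w i) (w j) (countUpTo a i) (countUpTo a j) t := by
  simp only [BalancedStep, countUpTo_succ]
  by_cases hi : outcomeAt a t = some i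
  · simp [hi, hij]
  by_cases hj : outcomeAt a t = some j
  · refine Or.inr (Or.inr ⟨by simp [hj], by simp [hi], ?_⟩)
    obtain ⟨k, rfl, hk⟩ := exists_of_outcomeAt_eq_some hj
    have hstep : stepProb w B a k ≠ 0 := fun h0 =>
      hprob.ne' (prod_eq_zero (mem_univ k) h0)
    have := (mem_filter.mp (mem_minSet_of_stepProb_ne_zero hstep hk)).2 i (hbid k hk)
    rwa [countBefore_eq_countUpTo, countBefore_eq_countUpTo] at this
  · simp [hi, hj]

end Allocation

/-- **Weighted balancedness invariant.**
(1) Let `wi, wj > 0` and consider nonnegative integer counts `ci, cj : ℕ → ℕ` both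
starting at `0` such that in each round at most one of them increases by `1`, and
`cj` increases in a round only if `cj/wj ≤ ci/wi` held at the start of that round.
Then after every round `cj/wj ≤ ci/wi + 1/wj`.
(2) In particular, every realization of positive probability of the Weighted Balanced
LIKE process in which agent `i` bids on every item that agent `j` receives satisfies
`|A_j|/w_j ≤ |A_i|/w_i + 1/w_j` for the final bundle sizes. -/
theorem weighted_balancedness_invariant :
    (∀ wi wj : ℝ, 0 < wi → 0 < wj → ∀ ci cj : ℕ → ℕ, ci 0 = 0 → cj 0 = 0 →
      (∀ t : ℕ,
        (ci (t + 1) = ci t ∧ cj (t + 1) = cj t) ∨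
        (ci (t + 1) = ci t + 1 ∧ cj (t + 1) = cj t) ∨
        (cj (t + 1) = cj t + 1 ∧ ci (t + 1) = ci t ∧
          (cj t : ℝ) / wj ≤ (ci t : ℝ) / wi)) →
      ∀ t : ℕ, (cj t : ℝ) / wj ≤ (ci t : ℝ) / wi + 1 / wj) ∧
    (∀ (n m : ℕ) (w : Fin n → ℝ), (∀ l, 0 < w l) →
      ∀ (B : Fin m → Finset (Fin n)) (a : Fin m → Option (Fin n)) (i j : Fin n),
        0 < outcomeProb w B a → (∀ k, a k = some j → i ∈ B k) →
        (bundleSize a j : ℝ) / w j ≤ (bundleSize a i : ℝ) / w i + 1 / w j) := by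
  refine ⟨fun wi wj hwi hwj ci cj hci hcj hstep =>
    div_le_div_add_one_div_of_balancedStep hwi hwj hci hcj hstep, ?_⟩
  intro n m w hw B a i j hprob hbid
  obtain rfl | hij := eq_or_ne i j
  · have : 0 < 1 / w i := one_div_pos.mpr (hw i)
    linarith
  rw [bundleSize_eq_countUpTo, bundleSize_eq_countUpTo]
  exact div_le_div_add_one_div_of_balancedStep (hw i) (hw j) (countUpTo_zero a i)
    (countUpTo_zero a j) (balancedStep_countUpTo hij hprob hbid) m

end
end

section
/- The Weighted Balanced LIKE mechanism is bounded envy-free ex-post: with 0/1 utilities, all agents bidding truthfully, and weights satisfying w_j ≥ 1 for all agents j, in every outcome of positive probability of the Weighted Balanced LIKE process and for every pair of agents i and j, the final bundles satisfy u_i(A_j)/w_j ≤ u_i(A_i)/w_i + 1. -/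
open Finset

attribute [local instance] Classical.propDecidable

noncomputable section

/-!
Let `K` be the last round in which `j` received an item that `i` values. Agent `i` bid on that
item, and `j` won it, so `j` minimized count/weight among the bidders:
`c_j(K)/w_j ≤ c_i(K)/w_i`. Agent `i` values at most `c_j(K) + 1` items of `j`'s bundle, and,
bidding truthfully, values every item it ever received, so `u_i(A_i) ≥ c_i(K)`. The one extra
item costs at most `1/w_j ≤ 1`.
-/

variable {n m : ℕ}

theorem mem_minSet_of_outcomeProb_pos {w : Fin n → ℝ} {B : Fin m → Finset (Fin n)}
    {a : Fin m → Option (Fin n)} (ha : 0 < outcomeProb w B a) {k : Fin m} {j : Fin n}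
    (hk : a k = some j) : j ∈ minSet w B a k := by
  have hstep : stepProb w B a k ≠ 0 := prod_ne_zero_iff.mp ha.ne' k (mem_univ k)
  by_contra hj
  by_cases hBk : B k = ∅ <;> simp [stepProb, hBk, hk, hj] at hstep

theorem apply_eq_one_of_outcomeProb_pos {w : Fin n → ℝ} {u : Fin n → Fin m → ℝ}
    (h01 : ∀ i k, u i k = 0 ∨ u i k = 1) {B : Fin m → Finset (Fin n)}
    (hB : ∀ k, B k = univ.filter fun l => 0 < u l k) {a : Fin m → Option (Fin n)}
    (ha : 0 < outcomeProb w B a) {k : Fin m} {l : Fin n} (hk : a k = some l) : u l k = 1 := by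
  have hbid : l ∈ B k := (mem_filter.mp (mem_minSet_of_outcomeProb_pos ha hk)).1
  rw [hB k, mem_filter] at hbid
  exact (h01 l k).resolve_left hbid.2.ne'

theorem realizedUtil_eq_card {u : Fin m → ℝ} {a : Fin m → Option (Fin n)} {j : Fin n}
    (hu : ∀ k, a k = some j → u k = 1) :
    realizedUtil u a j = #(univ.filter fun k => a k = some j) := by
  rw [realizedUtil, ← sum_filter, card_eq_sum_ones, Nat.cast_sum]
  exact sum_congr rfl fun k hk => by simp [hu k (mem_filter.mp hk).2]

theorem realizedUtil_eq_zero {u : Fin m → ℝ} {a : Fin m → Option (Fin n)} {j : Fin n}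
    (hu : ∀ k, a k = some j → u k = 0) : realizedUtil u a j = 0 :=
  sum_eq_zero fun k _ => by by_cases hk : a k = some j <;> simp [hk, hu k]

theorem countBefore_le_realizedUtil {u : Fin m → ℝ} {a : Fin m → Option (Fin n)} {j : Fin n}
    (hu : ∀ k, a k = some j → u k = 1) (k : Fin m) :
    (countBefore a j k : ℝ) ≤ realizedUtil u a j := by
  rw [realizedUtil_eq_card hu, countBefore, Nat.cast_le]
  exact card_le_card fun k' hk' => mem_filter.mpr ⟨mem_univ k', (mem_filter.mp hk').2.2⟩

theorem realizedUtil_le_countBefore_add_one {u : Fin m → ℝ} {a : Fin m → Option (Fin n)}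
    {j : Fin n} {K : Fin m} (hu : ∀ k, u k ≤ 1) (hK : ∀ k, a k = some j → u k ≠ 0 → k ≤ K) :
    realizedUtil u a j ≤ countBefore a j K + 1 := by
  have hsub : (univ.filter fun k => a k = some j ∧ u k ≠ 0) ⊆
      insert K (univ.filter fun k => k < K ∧ a k = some j) := by
    intro k hk
    obtain ⟨hak, huk⟩ := (mem_filter.mp hk).2
    rcases (hK k hak huk).lt_or_eq with hlt | rfl
    · exact mem_insert_of_mem (mem_filter.mpr ⟨mem_univ k, hlt, hak⟩)
    · exact mem_insert_self k _
  calc realizedUtil u a j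
      ≤ ∑ k, if a k = some j ∧ u k ≠ 0 then (1 : ℝ) else 0 := by
        refine sum_le_sum fun k _ => ?_
        by_cases hak : a k = some j <;> by_cases huk : u k = 0 <;> simp [hak, huk, hu k]
    _ = #(univ.filter fun k => a k = some j ∧ u k ≠ 0) := by rw [sum_boole]
    _ ≤ #(insert K (univ.filter fun k => k < K ∧ a k = some j)) := by
        exact_mod_cast card_le_card hsub
    _ ≤ countBefore a j K + 1 := by exact_mod_cast card_insert_le _ _

/-- **The Weighted Balanced LIKE mechanism is bounded envy-free ex-post.**
With 0/1 utilities, all agents bidding truthfully (the bidders for item `k` are exactly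
the agents `l` with `u l k > 0`), and weights satisfying `w j ≥ 1` for all agents `j`,
in every outcome `a` of positive probability of the Weighted Balanced LIKE process and
for every pair of agents `i` and `j`, the final bundles satisfy
`u_i(A_j)/w_j ≤ u_i(A_i)/w_i + 1`. -/
theorem weightedBalancedLike_boundedEnvyFree_exPost (n m : ℕ) (w : Fin n → ℝ)
    (hw : ∀ j, 1 ≤ w j) (u : Fin n → Fin m → ℝ)
    (h01 : ∀ i k, u i k = 0 ∨ u i k = 1) (B : Fin m → Finset (Fin n))
    (hB : ∀ k, B k = Finset.univ.filter fun l => 0 < u l k)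
    (a : Fin m → Option (Fin n)) (ha : 0 < outcomeProb w B a) (i j : Fin n) :
    realizedUtil (u i) a j / w j ≤ realizedUtil (u i) a i / w i + 1 := by
  have hwpos : ∀ l, 0 < w l := fun l => one_pos.trans_le (hw l)
  have hliked : ∀ k, a k = some i → u i k = 1 := fun k hk =>
    apply_eq_one_of_outcomeProb_pos h01 hB ha hk
  by_cases hT : ∀ k, a k = some j → u i k = 0
  · rw [realizedUtil_eq_zero hT, zero_div, realizedUtil_eq_card hliked]
    exact add_nonneg (div_nonneg (Nat.cast_nonneg _) (hwpos i).le) zero_le_one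
  push Not at hT
  obtain ⟨K, hKT, hKmax⟩ := (univ.filter fun k => a k = some j ∧ u i k ≠ 0).exists_max_image id
    (by simpa [Finset.Nonempty] using hT)
  simp only [mem_filter, mem_univ, true_and, id] at hKT hKmax
  have hiK : i ∈ B K := by
    rw [hB K, mem_filter, (h01 i K).resolve_left hKT.2]
    exact ⟨mem_univ i, one_pos⟩
  have hbalanced := (mem_filter.mp (mem_minSet_of_outcomeProb_pos ha hKT.1)).2 i hiK
  calc realizedUtil (u i) a j / w j ≤ (countBefore a j K + 1) / w j := by
        refine div_le_div_of_nonneg_right ?_ (hwpos j).le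
        exact realizedUtil_le_countBefore_add_one
          (fun k => by rcases h01 i k with h | h <;> simp [h]) fun k hk hku => hKmax k ⟨hk, hku⟩
    _ ≤ countBefore a j K / w j + 1 := by
        rw [add_div]; gcongr; exact (div_le_one (hwpos j)).mpr (hw j)
    _ ≤ countBefore a i K / w i + 1 := by gcongr
    _ ≤ realizedUtil (u i) a i / w i + 1 :=
        add_le_add_left (div_le_div_of_nonneg_right (countBefore_le_realizedUtil hliked K)
          (hwpos i).le) 1

end
end

section
/- The Balanced LIKE mechanism is neither bounded envy-free ex-ante nor bounded envy-free ex-post with general utilities: for every real p > 2, consider 2 agents and 2 items a (arriving first) and b (arriving second), where agent 1 has utility 0 for a and p for b, and agent 2 has utility 1 for a and p − 1 for b; under truthful bidding the Balanced LIKE process deterministically allocates a to agent 2 and b to agent 1, so that u_2(A_2) = E[u_2(A_2)] = 1 while u_2(A_1) = E[u_2(A_1)] = p − 1. Hence for every constant c there exists p > 2 such that u_2(A_1) − u_2(A_2) = E[u_2(A_1)] − E[u_2(A_2)] = p − 2 > c. -/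
open Finset

attribute [local instance] Classical.propDecidable

noncomputable section

/-! The process is forced along the outcome `![some 1, some 0]`: only agent 2 bids on `a`, and
at round `b` agent 1 is the unique bidder with the fewest items. An outcome in which every
decision has conditional probability `1` carries all the mass, because any other outcome first
deviates from it at a round whose history is the same, where the deviating decision has
probability `0`. -/

section Deterministic

variable {n m : ℕ} {w : Fin n → ℝ} {B : Fin m → Finset (Fin n)}

theorem countBefore_congr {a a' : Fin m → Option (Fin n)} {k : Fin m}
    (h : ∀ k' < k, a k' = a' k') (j : Fin n) : countBefore a j k = countBefore a' j k := by
  unfold countBefore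
  congr 1
  exact Finset.filter_congr fun k' _ => and_congr_right fun hk => by rw [h k' hk]

theorem minSet_congr {a a' : Fin m → Option (Fin n)} {k : Fin m}
    (h : ∀ k' < k, a k' = a' k') : minSet w B a k = minSet w B a' k := by
  simp only [minSet, countBefore_congr h]

theorem exists_minSet_eq_singleton_of_stepProb_eq_one {a : Fin m → Option (Fin n)} {k : Fin m}
    (hB : B k ≠ ∅) (h : stepProb w B a k = 1) : ∃ j, a k = some j ∧ minSet w B a k = {j} := by
  rcases ha : a k with _ | j <;> simp only [stepProb, hB, ha, if_false] at h
  · exact absurd h zero_ne_one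
  have hj : j ∈ minSet w B a k := by
    by_contra hj
    simp [hj] at h
  obtain ⟨x, hx⟩ := Finset.card_eq_one.mp (by simpa [hj] using h)
  rw [hx] at hj ⊢
  exact ⟨j, rfl, by rw [Finset.mem_singleton.mp hj]⟩

theorem stepProb_eq_zero_of_ne {a a' : Fin m → Option (Fin n)} {k : Fin m}
    (hprefix : ∀ k' < k, a k' = a' k') (hone : stepProb w B a' k = 1) (hne : a k ≠ a' k) :
    stepProb w B a k = 0 := by
  by_cases hB : B k = ∅
  · have ha' : a' k = none := by
      by_contra h
      simp [stepProb, hB, h] at hone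
    simpa [stepProb, hB] using ha' ▸ hne
  · obtain ⟨j', ha', hmin⟩ := exists_minSet_eq_singleton_of_stepProb_eq_one hB hone
    rw [← minSet_congr hprefix] at hmin
    rcases ha : a k with _ | j
    · simp [stepProb, hB, ha]
    · have hj : j ≠ j' := fun h => hne (by rw [ha, ha', h])
      simp [stepProb, hB, ha, hmin, hj]

theorem outcomeProb_eq_zero_of_ne {a a₀ : Fin m → Option (Fin n)}
    (h : ∀ k, stepProb w B a₀ k = 1) (hne : a ≠ a₀) : outcomeProb w B a = 0 := by
  obtain ⟨k₀, hk₀⟩ := Function.ne_iff.mp hne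
  obtain ⟨k, hk, hfirst⟩ := Finset.exists_min_image (univ.filter fun k => a k ≠ a₀ k) id
    ⟨k₀, by simpa using hk₀⟩
  have hprefix : ∀ k' < k, a k' = a₀ k' := fun k' hk' => by
    by_contra hne'
    exact absurd (hfirst k' (by simpa using hne')) (not_le.mpr hk')
  exact Finset.prod_eq_zero (mem_univ k) (stepProb_eq_zero_of_ne hprefix (h k) (by simpa using hk))

theorem outcomeProb_eq_one {a₀ : Fin m → Option (Fin n)} (h : ∀ k, stepProb w B a₀ k = 1) :
    outcomeProb w B a₀ = 1 :=
  Finset.prod_eq_one fun k _ => h k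

theorem expUtil_eq_realizedUtil {a₀ : Fin m → Option (Fin n)}
    (h : ∀ k, stepProb w B a₀ k = 1) (u : Fin m → ℝ) (j : Fin n) :
    expUtil w B u j = realizedUtil u a₀ j := by
  unfold expUtil
  rw [Finset.sum_eq_single a₀ (fun a _ ha => by rw [outcomeProb_eq_zero_of_ne h ha, zero_mul])
    (by simp), outcomeProb_eq_one h, one_mul]

theorem stepProb_eq_one_of_minSet_eq_singleton {a : Fin m → Option (Fin n)} {k : Fin m}
    {j : Fin n} (hmin : minSet w B a k = {j}) (hj : a k = some j) : stepProb w B a k = 1 := by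
  have hB : B k ≠ ∅ := Finset.nonempty_iff_ne_empty.mp
    ⟨j, Finset.filter_subset _ _ (hmin ▸ Finset.mem_singleton_self j)⟩
  simp [stepProb, hB, hj, hmin]

theorem minSet_eq_singleton_of_bids_eq_singleton {a : Fin m → Option (Fin n)} {k : Fin m}
    {j : Fin n} (h : B k = {j}) : minSet w B a k = {j} := by
  simp [minSet, h]

end Deterministic

/-- **The Balanced LIKE mechanism is neither bounded envy-free ex-ante nor bounded
envy-free ex-post with general utilities.**
For every real `p > 2`, consider 2 agents and 2 items `a = I₀` (arriving first) and
`b = I₁` (arriving second), where agent `1` (index 0) has utility `0` for `a` and `p`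
for `b`, and agent `2` (index 1) has utility `1` for `a` and `p − 1` for `b`.  Under
truthful bidding, the Balanced LIKE process (all weights `1`) deterministically
allocates `a` to agent 2 and `b` to agent 1 (this outcome has probability `1`), so
that `u_2(A_2) = E[u_2(A_2)] = 1` while `u_2(A_1) = E[u_2(A_1)] = p − 1`.  Hence for
every constant `c` there exists `p > 2` with
`u_2(A_1) − u_2(A_2) = E[u_2(A_1)] − E[u_2(A_2)] = p − 2 > c`. -/
theorem balancedLike_not_boundedEnvyFree :
    (∀ p : ℝ, 2 < p →
      ∀ u : Fin 2 → Fin 2 → ℝ, u = ![![0, p], ![1, p - 1]] →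
      ∀ B : Fin 2 → Finset (Fin 2),
        (∀ k, B k = Finset.univ.filter fun l => 0 < u l k) →
        outcomeProb (fun _ => (1 : ℝ)) B (![some 1, some 0] : Fin 2 → Option (Fin 2)) = 1 ∧
        realizedUtil (u 1) (![some 1, some 0] : Fin 2 → Option (Fin 2)) 1 = 1 ∧
        realizedUtil (u 1) (![some 1, some 0] : Fin 2 → Option (Fin 2)) 0 = p - 1 ∧
        expUtil (fun _ => (1 : ℝ)) B (u 1) 1 = 1 ∧
        expUtil (fun _ => (1 : ℝ)) B (u 1) 0 = p - 1) ∧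
    (∀ c : ℝ, ∃ p : ℝ, 2 < p ∧ p - 2 > c) := by
  refine ⟨fun p hp u hu B hB => ?_,
    fun c => ⟨|c| + 3, by linarith [abs_nonneg c], by linarith [le_abs_self c]⟩⟩
  subst hu
  have hB0 : B 0 = {1} := by
    rw [hB 0]; ext l; fin_cases l <;> simp
  have hB1 : B 1 = univ := by
    rw [hB 1]; ext l; fin_cases l <;> simp <;> linarith
  have hstep : ∀ k, stepProb (fun _ => (1 : ℝ)) B ![some 1, some 0] k = 1 := by
    rw [Fin.forall_fin_two]
    refine ⟨stepProb_eq_one_of_minSet_eq_singleton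
      (minSet_eq_singleton_of_bids_eq_singleton hB0) rfl,
      stepProb_eq_one_of_minSet_eq_singleton ?_ rfl⟩
    ext j
    fin_cases j <;>
      simp [minSet, hB1, countBefore, Fin.forall_fin_two, Finset.filter_and, Finset.filter_eq']
  refine ⟨outcomeProb_eq_one hstep, ?_, ?_, ?_, ?_⟩ <;>
    simp [expUtil_eq_realizedUtil hstep, realizedUtil]

end
end
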